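/- arXiv:2409.08690 — 2 statements merged into one kernel-verified Lean document; each statement's English description precedes it below -/
import Mathlib

section
/- (Recursion over amassed-clique graphs, equation (8)) Let g be a contact graph. Then ∏_{A block of g} σ(A) = ∑_{π} μ(E_{g(π)}), where the sum runs over all partitions π of the set of blocks of g and g(π) is the coarsened partition of Fin M whose blocks are the unions ⋃_{A ∈ C} A over the cells C of π. Equivalently, μ(E_g) = ∏_{A block of g} σ(A) − ∑_{π ≠ discrete partition} μ(E_{g(π)}). -/
/-!
Expanding `∏_A ∑_i ∏_{u ∈ A} p u i` gives a sum over colourings `f` of the blocks of `g`, and by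
independence the term of `f` is the probability that every `X u` takes the colour of its block.
Grouping the colourings by the partition `π` of the blocks into colour classes, the event
`E_{g(π)}` is the disjoint union of these events over the colourings whose colour classes form `π`.
The second identity isolates the term `π = ⊥`, for which `g(⊥) = g`.
-/

open Finset

namespace Finpartition

variable {α β : Type*} [DecidableEq α] {s : Finset α}

def ker [DecidableEq β] (s : Finset α) (f : α → β) : Finpartition s :=
  ofSetSetoid (Setoid.ker f) s

lemma mem_part_ker_iff [DecidableEq β] {f : α → β} {a b : α} :
    b ∈ (ker s f).part a ↔ a ∈ s ∧ b ∈ s ∧ f a = f b :=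
  mem_part_ofSetSetoid_iff_rel s

lemma ext_of_mem_part_iff {P Q : Finpartition s}
    (h : ∀ a ∈ s, ∀ b ∈ s, a ∈ P.part b ↔ a ∈ Q.part b) : P = Q := by
  have hpart : ∀ b ∈ s, P.part b = Q.part b := fun b hb => by
    ext a
    by_cases ha : a ∈ s
    · exact h a ha b hb
    · exact iff_of_false (fun h' => ha (P.le (P.part_mem.2 hb) h'))
        (fun h' => ha (Q.le (Q.part_mem.2 hb) h'))
  have hsub : ∀ {P Q : Finpartition s}, (∀ b ∈ s, P.part b = Q.part b) → P.parts ⊆ Q.parts := by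
    intro P Q hPQ t ht
    obtain ⟨b, hb⟩ := P.nonempty_of_mem_parts ht
    have hbs : b ∈ s := P.le ht hb
    rw [← P.part_eq_of_mem ht hb, hPQ b hbs]
    exact Q.part_mem.2 hbs
  exact Finpartition.ext ((hsub hpart).antisymm (hsub fun b hb => (hpart b hb).symm))

lemma mem_sup_iff_part_mem (P : Finpartition s) {C : Finset (Finset α)} (hC : C ⊆ P.parts)
    {a : α} (ha : a ∈ s) : a ∈ C.sup id ↔ P.part a ∈ C := by
  rw [mem_sup]
  constructor
  · rintro ⟨t, htC, hat⟩
    rwa [P.part_eq_of_mem (hC htC) hat]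
  · exact fun h => ⟨P.part a, h, P.mem_part ha⟩

lemma exists_mem_sup_iff (P : Finpartition s) (π : Finpartition P.parts) {a b : α}
    (ha : a ∈ s) (hb : b ∈ s) :
    (∃ C ∈ π.parts, a ∈ C.sup id ∧ b ∈ C.sup id) ↔ P.part a ∈ π.part (P.part b) := by
  rw [mem_part_iff_exists]
  refine exists_congr fun C => and_congr_right fun hC => ?_
  rw [P.mem_sup_iff_part_mem (π.le hC) ha, P.mem_sup_iff_part_mem (π.le hC) hb]

lemma mem_part_bot_iff {a b : α} : a ∈ (⊥ : Finpartition s).part b ↔ b ∈ s ∧ a = b := by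
  simp [mem_part_iff_exists]

section Univ

variable {ι : Type*} [Fintype ι] [DecidableEq ι] (g : Finpartition (univ : Finset ι))

def constOnParts (f : g.parts → β) (u : ι) : β :=
  f ⟨g.part u, g.part_mem.2 (mem_univ u)⟩

/-- Blocks are compared through their images under `x`; when `x` is constant on blocks, this
groups the blocks by the value `x` takes on them. -/
def kerParts [DecidableEq β] (x : ι → β) : Finpartition g.parts := ker g.parts (image x)

variable {g}

lemma constOnParts_of_mem (f : g.parts → β) {A : g.parts} {u : ι}
    (hu : u ∈ (A : Finset ι)) : g.constOnParts f u = f A := by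
  simp only [constOnParts, g.part_eq_of_mem A.2 hu]

lemma constOnParts_injective : Function.Injective (g.constOnParts (β := β)) := by
  intro f f' h
  funext A
  obtain ⟨u, hu⟩ := g.nonempty_of_mem_parts A.2
  rw [← constOnParts_of_mem f hu, ← constOnParts_of_mem f' hu, h]

lemma exists_constOnParts_eq {x : ι → β}
    (hx : ∀ u v, g.part u = g.part v → x u = x v) : ∃ f, g.constOnParts f = x := by
  choose r hr using fun A : g.parts => g.nonempty_of_mem_parts A.2
  exact ⟨fun A => x (r A), funext fun u =>
    hx _ _ (g.part_eq_of_mem (g.part_mem.2 (mem_univ u)) (hr _))⟩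

lemma prod_sum_eq_sum_prod_constOnParts {R : Type*} [Fintype β] [CommSemiring R]
    (p : ι → β → R) :
    ∏ A ∈ g.parts, ∑ i, ∏ u ∈ A, p u i = ∑ f : g.parts → β, ∏ u, p u (g.constOnParts f u) := by
  rw [← prod_coe_sort, Fintype.prod_sum]
  refine sum_congr rfl fun f _ => ?_
  have hsplit := prod_biUnion g.supIndep.pairwiseDisjoint (f := fun u => p u (g.constOnParts f u))
  rw [g.biUnion_parts, ← prod_coe_sort g.parts] at hsplit
  rw [hsplit]
  exact prod_congr rfl fun A _ => prod_congr rfl fun u hu => by rw [constOnParts_of_mem f hu]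

lemma image_part_constOnParts [DecidableEq β] (f : g.parts → β) (u : ι) :
    (g.part u).image (g.constOnParts f) = {g.constOnParts f u} := by
  ext y
  simp only [mem_image, mem_singleton]
  constructor
  · rintro ⟨v, hv, rfl⟩
    simp only [constOnParts, g.part_eq_of_mem (g.part_mem.2 (mem_univ u)) hv]
  · rintro rfl
    exact ⟨u, g.mem_part (mem_univ u), rfl⟩

lemma part_mem_part_kerParts_iff [DecidableEq β] (f : g.parts → β) (u v : ι) :
    g.part u ∈ (g.kerParts (g.constOnParts f)).part (g.part v) ↔
      g.constOnParts f u = g.constOnParts f v := by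
  simp only [kerParts, mem_part_ker_iff, image_part_constOnParts, singleton_inj, g.part_mem,
    mem_univ, true_and, eq_comm]

lemma eq_of_forall_eq_iff_part_mem_part {x : ι → β} {π π' : Finpartition g.parts}
    (h : ∀ u v, x u = x v ↔ g.part u ∈ π.part (g.part v))
    (h' : ∀ u v, x u = x v ↔ g.part u ∈ π'.part (g.part v)) : π = π' := by
  refine ext_of_mem_part_iff fun A hA B hB => ?_
  obtain ⟨u, -, rfl⟩ := g.part_surjOn hA
  obtain ⟨v, -, rfl⟩ := g.part_surjOn hB
  rw [← h, ← h']

lemma forall_eq_iff_part_mem_part_iff [DecidableEq β] {x : ι → β} {π : Finpartition g.parts} :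
    (∀ u v, x u = x v ↔ g.part u ∈ π.part (g.part v)) ↔
      ∃ f, g.kerParts (g.constOnParts f) = π ∧ g.constOnParts f = x := by
  constructor
  · intro h
    obtain ⟨f, rfl⟩ := exists_constOnParts_eq (g := g) fun u v huv =>
      (h u v).2 (huv ▸ π.mem_part (g.part_mem.2 (mem_univ u)))
    refine ⟨f, eq_of_forall_eq_iff_part_mem_part (fun u v => ?_) h, rfl⟩
    exact (part_mem_part_kerParts_iff f u v).symm
  · rintro ⟨f, rfl, rfl⟩ u v
    exact (part_mem_part_kerParts_iff f u v).symm

end Univ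

end Finpartition

open MeasureTheory ProbabilityTheory

section Measure

variable {Ω ι β : Type*} [MeasurableSpace Ω] [MeasurableSpace β] {μ : Measure Ω}
  {X : ι → Ω → β}

lemma measurableSet_forall_eq [MeasurableSingletonClass β] [Countable ι]
    (hX : ∀ i, Measurable (X i)) (x : ι → β) : MeasurableSet {ω | ∀ i, X i ω = x i} := by
  simp only [Set.ofPred_forall]
  exact .iInter fun i => hX i (measurableSet_singleton (x i))

lemma ProbabilityTheory.iIndepFun.measure_forall_eq [MeasurableSingletonClass β] [Fintype ι]
    (hX : iIndepFun X μ) (x : ι → β) :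
    μ {ω | ∀ i, X i ω = x i} = ∏ i, μ (X i ⁻¹' {x i}) := by
  have h := hX.measure_inter_preimage_eq_mul univ (sets := fun i => {x i})
    fun i _ => measurableSet_singleton (x i)
  simpa [Set.preimage, Set.ofPred_forall] using h

end Measure

lemma ENNReal.toReal_eq_sub_sum_erase {α : Type*} [DecidableEq α] {s : Finset α}
    {m : α → ENNReal} {r : NNReal} (h : (r : ENNReal) = ∑ x ∈ s, m x) {a : α} (ha : a ∈ s) :
    (m a).toReal = r - ∑ x ∈ s.erase a, (m x).toReal := by
  have hfin : ∀ x ∈ s, m x ≠ ⊤ := ENNReal.sum_ne_top.1 (h ▸ ENNReal.coe_ne_top)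
  have hreal := congrArg ENNReal.toReal h
  rw [ENNReal.coe_toReal, ENNReal.toReal_sum hfin, ← add_sum_erase s _ ha] at hreal
  linarith

theorem ProbabilityTheory.iIndepFun.sum_measure_eq_prod_sum_prod {Ω ι β : Type*}
    [MeasurableSpace Ω] [Fintype ι] [DecidableEq ι] [MeasurableSpace β] [Fintype β]
    [DecidableEq β] [MeasurableSingletonClass β] {μ : Measure Ω} {X : ι → Ω → β}
    (hX : iIndepFun X μ) (hXm : ∀ i, Measurable (X i)) (g : Finpartition (univ : Finset ι)) :
    ∑ π : Finpartition g.parts, μ {ω | ∀ u v, X u ω = X v ω ↔ g.part u ∈ π.part (g.part v)}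
      = ∏ A ∈ g.parts, ∑ i, ∏ u ∈ A, μ (X u ⁻¹' {i}) := by
  rw [g.prod_sum_eq_sum_prod_constOnParts,
    ← sum_fiberwise univ fun f => g.kerParts (g.constOnParts f)]
  refine sum_congr rfl fun π _ => ?_
  have hunion : {ω | ∀ u v, X u ω = X v ω ↔ g.part u ∈ π.part (g.part v)}
      = ⋃ f ∈ univ.filter (fun f => g.kerParts (g.constOnParts f) = π),
          {ω | ∀ u, X u ω = g.constOnParts f u} := by
    ext ω
    simp [Finpartition.forall_eq_iff_part_mem_part_iff (x := fun u => X u ω), funext_iff, eq_comm]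
  rw [hunion, measure_biUnion_finset]
  · exact sum_congr rfl fun f _ => hX.measure_forall_eq _
  · intro f _ f' _ hne
    exact Set.disjoint_left.2 fun ω h h' =>
      hne (Finpartition.constOnParts_injective (funext fun u => (h u).symm.trans (h' u)))
  · exact fun f _ => measurableSet_forall_eq hXm _

open scoped Classical in
theorem contact_graph_prob_recursion_general
    (N M : ℕ)
    {Ω : Type*} [MeasurableSpace Ω] (μ : Measure Ω)
    (X : Fin M → Ω → Fin N)
    (hXmeas : ∀ j, Measurable (X j))
    (hXindep : iIndepFun X μ)
    (p : Fin M → Fin N → NNReal)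
    (hp : ∀ j i, μ {ω | X j ω = i} = p j i)
    (g : Finpartition (Finset.univ : Finset (Fin M))) :
    ((∏ A ∈ g.parts, ∑ i : Fin N, ∏ u ∈ A, p u i : NNReal) : ENNReal)
        = ∑ π : Finpartition g.parts,
            μ {ω | ∀ u v : Fin M, X u ω = X v ω ↔
                ∃ C ∈ π.parts, u ∈ C.sup id ∧ v ∈ C.sup id}
      ∧
    (μ {ω | ∀ u v : Fin M, X u ω = X v ω ↔ ∃ B ∈ g.parts, u ∈ B ∧ v ∈ B}).toReal
        = ((∏ A ∈ g.parts, ∑ i : Fin N, ∏ u ∈ A, p u i : NNReal) : ℝ)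
          - ∑ π ∈ Finset.univ.filter (fun π : Finpartition g.parts => π ≠ ⊥),
              (μ {ω | ∀ u v : Fin M, X u ω = X v ω ↔
                  ∃ C ∈ π.parts, u ∈ C.sup id ∧ v ∈ C.sup id}).toReal := by
  have hevent (π : Finpartition g.parts) :
      {ω | ∀ u v : Fin M, X u ω = X v ω ↔ ∃ C ∈ π.parts, u ∈ C.sup id ∧ v ∈ C.sup id}
        = {ω | ∀ u v, X u ω = X v ω ↔ g.part u ∈ π.part (g.part v)} := by
    simp only [g.exists_mem_sup_iff π (mem_univ _) (mem_univ _)]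
  have hsum : ((∏ A ∈ g.parts, ∑ i : Fin N, ∏ u ∈ A, p u i : NNReal) : ENNReal)
      = ∑ π : Finpartition g.parts, μ {ω | ∀ u v : Fin M, X u ω = X v ω ↔
          ∃ C ∈ π.parts, u ∈ C.sup id ∧ v ∈ C.sup id} := by
    simp only [hevent, hXindep.sum_measure_eq_prod_sum_prod hXmeas g]
    push_cast
    simp only [Set.preimage, Set.mem_singleton_iff, hp]
  have hbot : {ω | ∀ u v : Fin M, X u ω = X v ω ↔ ∃ B ∈ g.parts, u ∈ B ∧ v ∈ B}
      = {ω | ∀ u v : Fin M, X u ω = X v ω ↔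
          ∃ C ∈ (⊥ : Finpartition g.parts).parts, u ∈ C.sup id ∧ v ∈ C.sup id} := by
    simp only [hevent, Finpartition.mem_part_bot_iff, g.part_mem, mem_univ, true_and,
      ← g.mem_part_iff_part_eq_part (mem_univ _) (mem_univ _), g.mem_part_iff_exists]
  refine ⟨hsum, ?_⟩
  rw [hbot, ENNReal.toReal_eq_sub_sum_erase hsum (mem_univ ⊥), filter_ne']

open scoped Classical in
/-- recursion over amassed-clique graphs, equation (8):
`∏_{A block of g} σ(A) = ∑_π μ(E_{g(π)})`, the sum running over all partitions `π` of the set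
of blocks of `g`, where `g(π)` is the coarsened partition of `Fin M` whose blocks are the
unions `⋃_{A ∈ C} A` over the cells `C` of `π`; equivalently,
`μ(E_g) = ∏_{A block of g} σ(A) − ∑_{π ≠ discrete} μ(E_{g(π)})`. -/
theorem contact_graph_prob_recursion
    (N M : ℕ) (hN : 1 ≤ N) (hM : 1 ≤ M)
    {Ω : Type*} [MeasurableSpace Ω] (μ : Measure Ω) [IsProbabilityMeasure μ]
    (X : Fin M → Ω → Fin N)
    (hXmeas : ∀ j, Measurable (X j))
    (hXindep : iIndepFun X μ)
    (p : Fin M → Fin N → NNReal)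
    (hp : ∀ j i, μ {ω | X j ω = i} = p j i)
    (hpsum : ∀ j, ∑ i, p j i = 1)
    (g : Finpartition (Finset.univ : Finset (Fin M))) :
    ((∏ A ∈ g.parts, ∑ i : Fin N, ∏ u ∈ A, p u i : NNReal) : ENNReal)
        = ∑ π : Finpartition g.parts,
            μ {ω | ∀ u v : Fin M, X u ω = X v ω ↔
                ∃ C ∈ π.parts, u ∈ C.sup id ∧ v ∈ C.sup id}
      ∧
    (μ {ω | ∀ u v : Fin M, X u ω = X v ω ↔ ∃ B ∈ g.parts, u ∈ B ∧ v ∈ B}).toReal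
        = ((∏ A ∈ g.parts, ∑ i : Fin N, ∏ u ∈ A, p u i : NNReal) : ℝ)
          - ∑ π ∈ Finset.univ.filter (fun π : Finpartition g.parts => π ≠ ⊥),
              (μ {ω | ∀ u v : Fin M, X u ω = X v ω ↔
                  ∃ C ∈ π.parts, u ∈ C.sup id ∧ v ∈ C.sup id}).toReal :=
  contact_graph_prob_recursion_general N M μ X hXmeas hXindep p hp g
end

section
/- (Lemma 3, unlabelled contact graph probability) Suppose all walkers have the same marginal distribution q : Fin N → ℝ≥0 (p j = q for all j). Let Q = {q_1, …, q_m} be a multiset of m positive integers summing to M, let c_j denote the multiplicity of j in Q for 1 ≤ j ≤ M, and set γ(Q) = M! / ( ∏_{i=1}^{m} q_i! · ∏_{j=1}^{M} c_j! ). Let E^u_Q be the union of the events E_g over all contact graphs g whose multiset of block sizes equals Q. Then for any fixed contact graph g whose multiset of block sizes equals Q, μ(E^u_Q) = γ(Q) · μ(E_g). -/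
/-!
The events `E_g` are pairwise disjoint, because the positions of the walkers determine their
contact graph. Relabelling the walkers by a permutation `σ` turns `E_g` into `E_{σ • g}`, and
independent identically distributed walkers are exchangeable, so all `E_{σ • g}` have the same
probability. Permutations act transitively on the partitions of a given block-size
multiset `Q`, so `μ(E^u_Q)` is `μ(E_g)` times the size of the orbit of `g`, which is
`M! / |Stab g|` by orbit-stabilizer. A permutation fixing `g` is a permutation of the blocks
among blocks of equal size (`∏ c_j!` choices) followed by bijections between corresponding
blocks (`∏ q_i!` choices).
-/

open MeasureTheory ProbabilityTheory Finset Function Equiv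
open scoped Nat

section Fibers

variable {α β γ : Type*} [Fintype α] [Fintype β] [DecidableEq γ] {f : α → γ} {f' : β → γ}

theorem Equiv.exists_fiberwise_of_card_fiber_eq
    (h : ∀ c, Fintype.card {a // f a = c} = Fintype.card {b // f' b = c}) :
    ∃ e : α ≃ β, ∀ a, f' (e a) = f a :=
  ⟨ofFiberEquiv fun c ↦ Fintype.equivOfCardEq (h c), ofFiberEquiv_map _⟩

theorem Equiv.card_fiberwise_of_card_fiber_eq [DecidableEq α] [DecidableEq β] [Fintype γ]
    (h : ∀ c, Fintype.card {a // f a = c} = Fintype.card {b // f' b = c}) :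
    Fintype.card {e : α ≃ β // ∀ a, f' (e a) = f a} = ∏ c, (Fintype.card {a // f a = c})! := by
  obtain ⟨e₀, he₀⟩ := exists_fiberwise_of_card_fiber_eq h
  have hf : ∀ b, f (e₀.symm b) = f' b := fun b ↦ by rw [← he₀, apply_symm_apply]
  rw [← DomMulAct.stabilizer_card f]
  refine Fintype.card_congr ⟨fun e ↦ ⟨e.1.trans e₀.symm, ?_⟩, fun σ ↦ ⟨σ.1.trans e₀, ?_⟩,
    fun e ↦ ?_, fun σ ↦ ?_⟩
  · funext a
    simp [hf, e.2]
  · intro a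
    simpa [he₀] using congrFun σ.2 a
  · ext; simp
  · ext; simp

end Fibers

namespace Finpartition

section Part

variable {α : Type*} [DecidableEq α] {s : Finset α}

def partSizes (P : Finpartition s) : Multiset ℕ := P.parts.val.map card

theorem count_partSizes (P : Finpartition s) (j : ℕ) :
    P.partSizes.count j = Fintype.card {B : P.parts // B.1.card = j} := by
  rw [partSizes, Multiset.count_map, ← Nat.card_eq_fintype_card,
    Nat.card_congr (subtypeSubtypeEquivSubtypeInter (· ∈ P.parts) (fun B ↦ B.card = j))]
  refine (Nat.card_eq_finsetCard (P.parts.filter (j = #·))).symm.trans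
    (Nat.card_congr (subtypeEquivRight fun B ↦ by rw [mem_filter, eq_comm]))

theorem parts_eq_image_part (P : Finpartition s) : P.parts = s.image P.part := by
  ext B
  simp only [mem_image]
  refine ⟨fun hB ↦ ?_, ?_⟩
  · obtain ⟨a, ha, rfl⟩ := P.part_surjOn hB
    exact ⟨a, ha, rfl⟩
  · rintro ⟨a, ha, rfl⟩
    exact P.part_mem.2 ha

theorem ext_part {P P' : Finpartition s} (h : ∀ a ∈ s, P.part a = P'.part a) : P = P' := by
  ext1
  rw [parts_eq_image_part, parts_eq_image_part, image_congr h]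

end Part

variable {α : Type*} [Fintype α] [DecidableEq α]

def toPart (P : Finpartition (univ : Finset α)) (a : α) : P.parts :=
  ⟨P.part a, P.part_mem.2 (mem_univ a)⟩

theorem toPart_eq_toPart_iff (P : Finpartition (univ : Finset α)) {a b : α} :
    P.toPart a = P.toPart b ↔ a ∈ P.part b := by
  rw [toPart, toPart, Subtype.mk.injEq, P.mem_part_iff_part_eq_part (mem_univ a) (mem_univ b)]

theorem toPart_surjective (P : Finpartition (univ : Finset α)) : Surjective P.toPart := by
  rintro ⟨B, hB⟩
  obtain ⟨a, -, rfl⟩ := P.part_surjOn hB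
  exact ⟨a, rfl⟩

theorem card_fiber_toPart (P : Finpartition (univ : Finset α)) (B : P.parts) :
    Fintype.card {a // P.toPart a = B} = B.1.card := by
  rw [← Fintype.card_coe]
  exact Fintype.card_congr (subtypeEquivRight fun a ↦ by
    rw [toPart, Subtype.ext_iff, P.part_eq_iff_mem B.2])

instance : SMul (Perm α) (Finpartition (univ : Finset α)) where
  smul σ P := (P.map ⟨σ.finsetCongr, map_subset_map⟩).copy (map_univ_equiv σ)

theorem smul_parts (σ : Perm α) (P : Finpartition (univ : Finset α)) :
    (σ • P).parts = P.parts.map σ.finsetCongr.toEmbedding := rfl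

instance : MulAction (Perm α) (Finpartition (univ : Finset α)) where
  one_smul P := by
    ext1
    rw [smul_parts, Perm.one_def, finsetCongr_refl, refl_toEmbedding, map_refl]
  mul_smul σ τ P := by
    ext1
    rw [smul_parts, smul_parts, smul_parts, map_map, Perm.mul_def, ← Equiv.finsetCongr_trans]
    rfl

variable {P P' : Finpartition (univ : Finset α)}

theorem part_smul (σ : Perm α) (P : Finpartition (univ : Finset α)) (a : α) :
    (σ • P).part (σ a) = (P.part a).map σ.toEmbedding :=
  (σ • P).part_eq_of_mem (by rw [smul_parts]; exact mem_map_of_mem _ (P.part_mem.2 (mem_univ a)))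
    (mem_map_of_mem _ (P.mem_part (mem_univ a)))

theorem partSizes_smul (σ : Perm α) (P : Finpartition (univ : Finset α)) :
    (σ • P).partSizes = P.partSizes := by
  rw [partSizes, partSizes, smul_parts, map_val, Multiset.map_map]
  exact Multiset.map_congr rfl fun B _ ↦ card_map _

theorem smul_eq_of_toPart_apply {σ : Perm α} (e : P.parts ≃ P'.parts)
    (h : ∀ a, P'.toPart (σ a) = e (P.toPart a)) : σ • P = P' := by
  refine ext_part fun x _ ↦ ?_
  obtain ⟨a, rfl⟩ := σ.surjective x
  ext y
  obtain ⟨b, rfl⟩ := σ.surjective y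
  rw [part_smul, mem_map_equiv, symm_apply_apply, ← toPart_eq_toPart_iff,
    ← toPart_eq_toPart_iff, h, h, e.apply_eq_iff_eq]

theorem card_fiber_comp_toPart (e : P.parts ≃ P'.parts) (he : ∀ B, (e B).1.card = B.1.card)
    (C : P'.parts) : Fintype.card {a // e (P.toPart a) = C} = C.1.card := by
  rw [Fintype.card_congr (subtypeEquivRight fun a ↦ e.eq_symm_apply.symm),
    card_fiber_toPart, ← he, apply_symm_apply]

theorem exists_perm_smul_eq_of_partSizes_eq (h : P.partSizes = P'.partSizes) :
    ∃ σ : Perm α, σ • P = P' := by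
  obtain ⟨e, he⟩ := exists_fiberwise_of_card_fiber_eq (f := fun B : P.parts ↦ B.1.card)
    (f' := fun B : P'.parts ↦ B.1.card) fun j ↦ by rw [← count_partSizes, ← count_partSizes, h]
  obtain ⟨σ, hσ⟩ := exists_fiberwise_of_card_fiber_eq (f := fun a ↦ e (P.toPart a))
    (f' := P'.toPart) fun C ↦ by rw [card_fiber_comp_toPart e he, card_fiber_toPart]
  exact ⟨σ, smul_eq_of_toPart_apply e hσ⟩

theorem orbit_eq_setOf_partSizes_eq (P : Finpartition (univ : Finset α)) :
    MulAction.orbit (Perm α) P = {P' | P'.partSizes = P.partSizes} := by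
  ext P'
  refine ⟨?_, fun h ↦ exists_perm_smul_eq_of_partSizes_eq h.symm⟩
  rintro ⟨σ, rfl⟩
  exact partSizes_smul σ P

theorem map_mem_parts_of_smul_eq {σ : Perm α} (h : σ • P = P') {B : Finset α}
    (hB : B ∈ P.parts) : B.map σ.toEmbedding ∈ P'.parts := by
  rw [← h, smul_parts]
  exact mem_map_of_mem _ hB

noncomputable def permParts {σ : Perm α} (h : σ • P = P) : Perm P.parts :=
  Equiv.ofBijective (fun B ↦ ⟨B.1.map σ.toEmbedding, map_mem_parts_of_smul_eq h B.2⟩)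
    (Finite.injective_iff_bijective.1 fun _ _ hBC ↦
      Subtype.ext (map_injective σ.toEmbedding (congrArg Subtype.val hBC)))

theorem card_permParts_apply {σ : Perm α} (h : σ • P = P) (B : P.parts) :
    (permParts h B).1.card = B.1.card :=
  card_map _

theorem toPart_apply_eq_permParts {σ : Perm α} (h : σ • P = P) (a : α) :
    P.toPart (σ a) = permParts h (P.toPart a) := by
  have h' := part_smul σ P a
  rw [h] at h'
  exact Subtype.ext h'

noncomputable def stabilizerEquivSigma (P : Finpartition (univ : Finset α)) :
    MulAction.stabilizer (Perm α) P ≃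
      Σ e : {e : Perm P.parts // ∀ B, (e B).1.card = B.1.card},
        {σ : Perm α // ∀ a, P.toPart (σ a) = e.1 (P.toPart a)} where
  toFun σ :=
    have h := MulAction.mem_stabilizer_iff.1 σ.2
    ⟨⟨permParts h, card_permParts_apply h⟩, σ.1, toPart_apply_eq_permParts h⟩
  invFun x := ⟨x.2.1, smul_eq_of_toPart_apply x.1.1 x.2.2⟩
  left_inv σ := rfl
  right_inv x := by
    refine Sigma.subtype_ext (Subtype.ext (Equiv.ext fun B ↦ ?_)) rfl
    obtain ⟨a, rfl⟩ := P.toPart_surjective B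
    exact (toPart_apply_eq_permParts (smul_eq_of_toPart_apply x.1.1 x.2.2) a).symm.trans
      (x.2.2 a)

theorem card_perm_parts_preserving_card (P : Finpartition (univ : Finset α)) :
    Fintype.card {e : Perm P.parts // ∀ B, (e B).1.card = B.1.card} =
      ∏ j ∈ P.partSizes.toFinset, (P.partSizes.count j)! := by
  let size : P.parts → ℕ := fun B ↦ B.1.card
  have himage : univ.image size = P.partSizes.toFinset := by
    ext j
    simp [size, partSizes]
  calc _ = Fintype.card {e : Perm P.parts // size ∘ e = size} :=
        Fintype.card_congr (subtypeEquivRight fun e ↦ funext_iff.symm)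
    _ = _ := DomMulAct.stabilizer_card' size
    _ = _ := by rw [himage]; exact prod_congr rfl fun j _ ↦ by rw [count_partSizes]

theorem card_stabilizer (P : Finpartition (univ : Finset α)) :
    Nat.card (MulAction.stabilizer (Perm α) P) =
      (P.partSizes.map Nat.factorial).prod *
        ∏ j ∈ P.partSizes.toFinset, (P.partSizes.count j)! := by
  have hfiber (e : {e : Perm P.parts // ∀ B, (e B).1.card = B.1.card}) :
      Fintype.card {σ : Perm α // ∀ a, P.toPart (σ a) = e.1 (P.toPart a)} =
        (P.partSizes.map Nat.factorial).prod := by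
    rw [card_fiberwise_of_card_fiber_eq fun C ↦ by
      rw [card_fiber_comp_toPart e.1 e.2, card_fiber_toPart]]
    simp_rw [card_fiber_comp_toPart e.1 e.2]
    rw [prod_coe_sort P.parts (fun B ↦ (#B)!), partSizes, Multiset.map_map]
    rfl
  rw [Nat.card_congr (stabilizerEquivSigma P), Nat.card_eq_fintype_card, Fintype.card_sigma,
    sum_congr rfl fun e _ ↦ hfiber e, sum_const, card_univ, card_perm_parts_preserving_card,
    smul_eq_mul, mul_comm]

theorem card_filter_partSizes_eq_mul (P : Finpartition (univ : Finset α)) :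
    #{P' : Finpartition (univ : Finset α) | P'.partSizes = P.partSizes} *
        ((P.partSizes.map Nat.factorial).prod *
          ∏ j ∈ P.partSizes.toFinset, (P.partSizes.count j)!) =
      (Fintype.card α)! := by
  rw [← card_stabilizer, ← Fintype.card_perm, ← Nat.card_eq_fintype_card,
    ← (MulAction.stabilizer (Perm α) P).card_mul_index, MulAction.index_stabilizer,
    orbit_eq_setOf_partSizes_eq, mul_comm, Set.ncard_eq_toFinset_card', Set.toFinset_ofPred]

theorem partSizes_toFinset_subset_Icc (P : Finpartition (univ : Finset α)) :
    P.partSizes.toFinset ⊆ Icc 1 (Fintype.card α) := by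
  intro j hj
  simp only [partSizes, Multiset.mem_toFinset, Multiset.mem_map, mem_val] at hj
  obtain ⟨B, hB, rfl⟩ := hj
  exact mem_Icc.2 ⟨(P.nonempty_of_mem_parts hB).card_pos, card_le_univ B⟩

theorem prod_Icc_factorial_count_partSizes (P : Finpartition (univ : Finset α)) :
    ∏ j ∈ Icc 1 (Fintype.card α), (P.partSizes.count j)! =
      ∏ j ∈ P.partSizes.toFinset, (P.partSizes.count j)! :=
  (prod_subset P.partSizes_toFinset_subset_Icc fun j _ hj ↦ by
    rw [Multiset.count_eq_zero.2 (by simpa using hj), Nat.factorial_zero]).symm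

end Finpartition

theorem ProbabilityTheory.iIndepFun.map_comp_perm {ι Ω β : Type*} [Fintype ι] [MeasurableSpace Ω]
    [MeasurableSpace β] {μ : Measure Ω} [IsProbabilityMeasure μ] {X : ι → Ω → β}
    (hX : iIndepFun X μ) (hmeas : ∀ i, Measurable (X i))
    (hident : ∀ i j, μ.map (X i) = μ.map (X j)) (σ : Perm ι) :
    μ.map (fun ω i ↦ X (σ i) ω) = μ.map (fun ω i ↦ X i ω) := by
  rw [(hX.precomp σ.injective).map_fun_eq_pi_map fun i ↦ (hmeas (σ i)).aemeasurable,
    hX.map_fun_eq_pi_map fun i ↦ (hmeas i).aemeasurable]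
  exact congrArg Measure.pi (funext fun i ↦ hident _ _)

section ContactEvent

variable {α Ω β : Type*} [Fintype α] [DecidableEq α]

def contactEvent (X : α → Ω → β) (P : Finpartition (univ : Finset α)) : Set Ω :=
  {ω | ∀ u v, X u ω = X v ω ↔ ∃ B ∈ P.parts, u ∈ B ∧ v ∈ B}

theorem contactEvent_smul (X : α → Ω → β) (σ : Perm α) (P : Finpartition (univ : Finset α)) :
    contactEvent X (σ • P) =
      (fun ω a ↦ X (σ a) ω) ⁻¹' {x | ∀ a b, x a = x b ↔ a ∈ P.part b} := by
  have hmem (a b : α) : σ a ∈ (σ • P).part (σ b) ↔ a ∈ P.part b := by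
    rw [Finpartition.part_smul, mem_map_equiv, symm_apply_apply]
  ext ω
  simp only [contactEvent, Set.mem_ofPred_eq, Set.mem_preimage,
    ← Finpartition.mem_part_iff_exists]
  refine ⟨fun h a b ↦ by rw [h, hmem], fun h u v ↦ ?_⟩
  obtain ⟨a, rfl⟩ := σ.surjective u
  obtain ⟨b, rfl⟩ := σ.surjective v
  rw [h, hmem]

theorem contactEvent_eq_preimage (X : α → Ω → β) (P : Finpartition (univ : Finset α)) :
    contactEvent X P = (fun ω a ↦ X a ω) ⁻¹' {x | ∀ a b, x a = x b ↔ a ∈ P.part b} := by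
  simpa using contactEvent_smul X 1 P

theorem pairwise_disjoint_contactEvent (X : α → Ω → β) :
    Pairwise (Disjoint on contactEvent X) := by
  intro P P' hne
  refine Set.disjoint_left.2 fun ω h h' ↦ hne (Finpartition.ext_part fun a _ ↦ ?_)
  ext b
  rw [Finpartition.mem_part_iff_exists, Finpartition.mem_part_iff_exists]
  exact (h b a).symm.trans (h' b a)

variable [MeasurableSpace Ω] [MeasurableSpace β] [Countable β] [MeasurableSingletonClass β]
  {X : α → Ω → β}

theorem measurableSet_contactEvent (hmeas : ∀ a, Measurable (X a))
    (P : Finpartition (univ : Finset α)) : MeasurableSet (contactEvent X P) := by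
  rw [contactEvent_eq_preimage]
  exact measurable_pi_lambda _ hmeas (Set.to_countable _).measurableSet

variable {μ : Measure Ω} [IsProbabilityMeasure μ]

theorem measure_contactEvent_smul (hX : iIndepFun X μ) (hmeas : ∀ a, Measurable (X a))
    (hident : ∀ a b, μ.map (X a) = μ.map (X b)) (σ : Perm α)
    (P : Finpartition (univ : Finset α)) :
    μ (contactEvent X (σ • P)) = μ (contactEvent X P) := by
  have hS : MeasurableSet {x : α → β | ∀ a b, x a = x b ↔ a ∈ P.part b} :=
    (Set.to_countable _).measurableSet
  rw [contactEvent_smul, contactEvent_eq_preimage,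
    ← Measure.map_apply (measurable_pi_lambda _ fun a ↦ hmeas (σ a)) hS,
    ← Measure.map_apply (measurable_pi_lambda _ hmeas) hS, hX.map_comp_perm hmeas hident]

theorem measure_iUnion_contactEvent_partSizes_eq (hX : iIndepFun X μ)
    (hmeas : ∀ a, Measurable (X a)) (hident : ∀ a b, μ.map (X a) = μ.map (X b))
    (P : Finpartition (univ : Finset α)) :
    μ (⋃ (P' : Finpartition (univ : Finset α)) (_ : P'.partSizes = P.partSizes),
        contactEvent X P') =
      #{P' : Finpartition (univ : Finset α) | P'.partSizes = P.partSizes} *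
        μ (contactEvent X P) := by
  have hU : (⋃ (P' : Finpartition (univ : Finset α)) (_ : P'.partSizes = P.partSizes),
      contactEvent X P') =
        ⋃ P' ∈ ({P' | P'.partSizes = P.partSizes} : Finset (Finpartition (univ : Finset α))),
          contactEvent X P' := by
    simp
  rw [hU, measure_biUnion_finset ((pairwise_disjoint_contactEvent X).set_pairwise _)
    fun P' _ ↦ measurableSet_contactEvent hmeas P', ← nsmul_eq_mul, ← sum_const]
  refine sum_congr rfl fun P' hP' ↦ ?_
  obtain ⟨σ, rfl⟩ := Finpartition.exists_perm_smul_eq_of_partSizes_eq (mem_filter.1 hP').2.symm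
  exact measure_contactEvent_smul hX hmeas hident σ P

end ContactEvent

theorem unlabelled_contact_graph_prob_general
    (N M : ℕ)
    {Ω : Type*} [MeasurableSpace Ω] (μ : Measure Ω) [IsProbabilityMeasure μ]
    (X : Fin M → Ω → Fin N)
    (hXmeas : ∀ j, Measurable (X j))
    (hXindep : iIndepFun X μ)
    (p : Fin M → Fin N → NNReal)
    (hp : ∀ j i, μ {ω | X j ω = i} = p j i)
    (q : Fin N → NNReal) (hq : ∀ j, p j = q)
    (Q : Multiset ℕ)
    (g : Finpartition (Finset.univ : Finset (Fin M)))
    (hg : g.parts.val.map Finset.card = Q) :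
    (μ (⋃ (g' : Finpartition (Finset.univ : Finset (Fin M)))
          (_ : g'.parts.val.map Finset.card = Q),
          {ω | ∀ u v : Fin M, X u ω = X v ω ↔ ∃ B ∈ g'.parts, u ∈ B ∧ v ∈ B})).toReal
      = ((M.factorial : ℝ) /
          ((Q.map Nat.factorial).prod
            * ∏ j ∈ Finset.Icc 1 M, ((Q.count j).factorial : ℕ)))
        * (μ {ω | ∀ u v : Fin M, X u ω = X v ω ↔ ∃ B ∈ g.parts, u ∈ B ∧ v ∈ B}).toReal := by
  subst hg
  have hident : ∀ i j, μ.map (X i) = μ.map (X j) := fun i j ↦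
    Measure.ext_of_singleton fun c ↦ by
      rw [Measure.map_apply (hXmeas i) (measurableSet_singleton c),
        Measure.map_apply (hXmeas j) (measurableSet_singleton c)]
      change μ {ω | X i ω = c} = μ {ω | X j ω = c}
      rw [hp, hp, hq, hq]
  have hcount := g.card_filter_partSizes_eq_mul
  rw [← g.prod_Icc_factorial_count_partSizes, Fintype.card_fin] at hcount
  have hunion := measure_iUnion_contactEvent_partSizes_eq hXindep hXmeas hident g
  -- keeps the filter's decidability instance out of the unfolding of `partSizes` below
  generalize #{P' : Finpartition (univ : Finset (Fin M)) | P'.partSizes = g.partSizes} = n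
    at hunion hcount
  have hK : (g.partSizes.map Nat.factorial).prod * ∏ j ∈ Icc 1 M, (g.partSizes.count j)! ≠ 0 :=
    fun h ↦ Nat.factorial_ne_zero M (by rw [← hcount, h, mul_zero])
  simp only [contactEvent, Finpartition.partSizes] at hunion hcount hK
  rw [hunion, ENNReal.toReal_mul, ENNReal.toReal_natCast, ← Nat.cast_mul,
    ← hcount, Nat.cast_mul, mul_div_cancel_right₀ _ (Nat.cast_ne_zero.2 hK)]

/-- Lemma 3, unlabelled contact graph probability: when all walkers are
identically distributed, the probability of observing *some* contact graph with block-size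
multiset `Q` equals `γ(Q)` times the probability of any fixed contact graph with block-size
multiset `Q`, where `γ(Q) = M! / (∏ᵢ qᵢ! · ∏ⱼ cⱼ!)`. -/
theorem unlabelled_contact_graph_prob
    (N M : ℕ) (hN : 1 ≤ N) (hM : 1 ≤ M)
    {Ω : Type*} [MeasurableSpace Ω] (μ : Measure Ω) [IsProbabilityMeasure μ]
    (X : Fin M → Ω → Fin N)
    (hXmeas : ∀ j, Measurable (X j))
    (hXindep : iIndepFun X μ)
    (p : Fin M → Fin N → NNReal)
    (hp : ∀ j i, μ {ω | X j ω = i} = p j i)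
    (hpsum : ∀ j, ∑ i, p j i = 1)
    (q : Fin N → NNReal) (hq : ∀ j, p j = q)
    (m : ℕ) (Q : Multiset ℕ)
    (hQpos : ∀ a ∈ Q, 0 < a) (hQcard : Multiset.card Q = m) (hQsum : Q.sum = M)
    (g : Finpartition (Finset.univ : Finset (Fin M)))
    (hg : g.parts.val.map Finset.card = Q) :
    (μ (⋃ (g' : Finpartition (Finset.univ : Finset (Fin M)))
          (_ : g'.parts.val.map Finset.card = Q),
          {ω | ∀ u v : Fin M, X u ω = X v ω ↔ ∃ B ∈ g'.parts, u ∈ B ∧ v ∈ B})).toReal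
      = ((M.factorial : ℝ) /
          ((Q.map Nat.factorial).prod
            * ∏ j ∈ Finset.Icc 1 M, ((Q.count j).factorial : ℕ)))
        * (μ {ω | ∀ u v : Fin M, X u ω = X v ω ↔ ∃ B ∈ g.parts, u ∈ B ∧ v ∈ B}).toReal :=
  unlabelled_contact_graph_prob_general N M μ X hXmeas hXindep p hp q hq Q g hg
end
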